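/- arXiv:1904.03362 — 4 statements merged into one kernel-verified Lean document; each statement's English description precedes it below -/
import Mathlib

section
/- Fix E₀ > 1/2. For γ > 1 let σ(γ) < 0 be the shock speed and ρ₁(γ) the post-shock density with σ(γ) → 0 and ρ₁(γ)σ(γ) → -1 as γ → 1⁺. Then for every continuous compactly supported φ : ℝ → ℝ, ∫_{-∞}^{σ(γ)} 1·φ(η) dη + ∫_{σ(γ)}^{0} ρ₁(γ)·φ(η) dη → ∫_{-∞}^{0} φ(η) dη + φ(0) as γ → 1⁺. -/
open Filter Topology MeasureTheory

theorem stmt_6 (E₀ : ℝ) (hE : 1/2 < E₀) (σ ρ₁ : ℝ → ℝ)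
    (hσneg : ∀ γ > 1, σ γ < 0)
    (hσ : Tendsto σ (𝓝[>] 1) (𝓝 0))
    (hρσ : Tendsto (fun γ => ρ₁ γ * σ γ) (𝓝[>] 1) (𝓝 (-1)))
    (φ : ℝ → ℝ) (hφ : Continuous φ) (hφc : HasCompactSupport φ) :
    Tendsto (fun γ => (∫ η in Set.Iio (σ γ), φ η) +
        ∫ η in Set.Ioo (σ γ) 0, ρ₁ γ * φ η)
      (𝓝[>] 1) (𝓝 ((∫ η in Set.Iio (0:ℝ), φ η) + φ 0)) := by
  have hint : Integrable φ := hφ.integrable_of_hasCompactSupport hφc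
  set H : ℝ → ℝ := fun s => ∫ x in s..0, φ x with hHdef
  have hderiv : HasDerivAt H (-φ 0) 0 := by
    apply intervalIntegral.integral_hasDerivAt_left hint.intervalIntegrable
    · exact hφ.stronglyMeasurableAtFilter _ _
    · exact hφ.continuousAt
  have hH0 : H 0 = 0 := by simp [hHdef]
  have hslope : Tendsto (fun s => (H s) / s) (𝓝[≠] 0) (𝓝 (-φ 0)) := by
    have h := hasDerivAt_iff_tendsto_slope.mp hderiv
    refine h.congr' ?_
    filter_upwards with s
    simp [slope_def_field, hH0]
  -- σ tends to 0 within nonzero reals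
  have hσne : ∀ᶠ γ in 𝓝[>] (1:ℝ), σ γ < 0 :=
    eventually_mem_nhdsWithin.mono fun γ hγ => hσneg γ hγ
  have hσ' : Tendsto σ (𝓝[>] (1:ℝ)) (𝓝[≠] 0) := by
    rw [tendsto_nhdsWithin_iff]
    exact ⟨hσ, hσne.mono fun γ h => ne_of_lt h⟩
  have hquot : Tendsto (fun γ => H (σ γ) / σ γ) (𝓝[>] (1:ℝ)) (𝓝 (-φ 0)) :=
    hslope.comp hσ'
  have hHto0 : Tendsto (fun γ => H (σ γ)) (𝓝[>] (1:ℝ)) (𝓝 0) := by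
    have := hσ.mul hquot
    simp only [zero_mul] at this
    refine this.congr' ?_
    filter_upwards [hσne] with γ h
    field_simp [ne_of_lt h]
  -- the key limit
  have hmain : Tendsto (fun γ => ((∫ η in Set.Iio (0:ℝ), φ η) - H (σ γ)) +
      (ρ₁ γ * σ γ) * (H (σ γ) / σ γ)) (𝓝[>] (1:ℝ))
      (𝓝 ((∫ η in Set.Iio (0:ℝ), φ η) + φ 0)) := by
    have h1 : Tendsto (fun γ => (∫ η in Set.Iio (0:ℝ), φ η) - H (σ γ))
        (𝓝[>] (1:ℝ)) (𝓝 (∫ η in Set.Iio (0:ℝ), φ η)) := by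
      simpa using (tendsto_const_nhds.sub hHto0)
    have h2 := hρσ.mul hquot
    have : (-1 : ℝ) * (-φ 0) = φ 0 := by ring
    rw [this] at h2
    exact h1.add h2
  refine hmain.congr' ?_
  filter_upwards [hσne] with γ hlt
  have hne : σ γ ≠ 0 := ne_of_lt hlt
  have hle : σ γ ≤ 0 := le_of_lt hlt
  have hHeq : H (σ γ) = ∫ η in Set.Ioo (σ γ) 0, φ η := by
    show (∫ x in σ γ..0, φ x) = _
    rw [intervalIntegral.integral_of_le hle, MeasureTheory.integral_Ioc_eq_integral_Ioo]
  have hsplit : (∫ η in Set.Iio (0:ℝ), φ η) =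
      (∫ η in Set.Iio (σ γ), φ η) + ∫ η in Set.Ico (σ γ) 0, φ η := by
    rw [← MeasureTheory.setIntegral_union]
    · rw [Set.Iio_union_Ico_eq_Iio hle]
    · exact (Set.Iio_disjoint_Ici le_rfl).mono_right Set.Ico_subset_Ici_self
    · exact measurableSet_Ico
    · exact hint.integrableOn
    · exact hint.integrableOn
  have hIco : (∫ η in Set.Ico (σ γ) 0, φ η) = H (σ γ) := by
    rw [hHeq, MeasureTheory.integral_Ico_eq_integral_Ioo]
  have hsecond : (∫ η in Set.Ioo (σ γ) 0, ρ₁ γ * φ η) = ρ₁ γ * H (σ γ) := by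
    rw [MeasureTheory.integral_const_mul, hHeq]
  rw [hsecond]
  rw [hsplit, hIco]
  field_simp
  ring
end

section
/- Let γ > 1. The triple (ρ, u, E) defined by (ρ,u,E) = (1, 1, 1/2) for x/t < (1-γ)/2 and (ρ,u,E) = ((γ+1)/(γ-1), 0, 1/2) for (1-γ)/2 < x/t < 0 satisfies the Rankine–Hugoniot conditions for the full Euler system with state equation p = (γ-1)ρ(E - u²/2) across the discontinuity x = ((1-γ)/2)t, i.e., with σ = (1-γ)/2, ρ₀=u₀=1, E₀=1/2, ρ₁=(γ+1)/(γ-1), u₁=0, E₁=1/2: σ(ρ₁-ρ₀) = ρ₁u₁ - ρ₀u₀, σ(ρ₁u₁-ρ₀u₀) = ρ₁u₁²+p₁ - ρ₀u₀²-p₀, σ(ρ₁E₁-ρ₀E₀) = ρ₁u₁E₁+u₁p₁-ρ₀u₀E₀-u₀p₀, where p₀ = 0 and p₁ = (γ+1)/2. -/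
theorem stmt_8 (γ σ ρ₀ u₀ E₀ ρ₁ u₁ E₁ p₀ p₁ : ℝ) (hγ : 1 < γ)
    (hσ : σ = (1 - γ) / 2) (hρ0 : ρ₀ = 1) (hu0 : u₀ = 1) (hE0 : E₀ = 1/2)
    (hρ1 : ρ₁ = (γ + 1) / (γ - 1)) (hu1 : u₁ = 0) (hE1 : E₁ = 1/2)
    (hp0 : p₀ = 0) (hp1 : p₁ = (γ + 1) / 2) :
    p₀ = (γ - 1) * ρ₀ * (E₀ - u₀^2 / 2) ∧
    p₁ = (γ - 1) * ρ₁ * (E₁ - u₁^2 / 2) ∧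
    σ * (ρ₁ - ρ₀) = ρ₁ * u₁ - ρ₀ * u₀ ∧
    σ * (ρ₁ * u₁ - ρ₀ * u₀) = ρ₁ * u₁^2 + p₁ - ρ₀ * u₀^2 - p₀ ∧
    σ * (ρ₁ * E₁ - ρ₀ * E₀) =
      ρ₁ * u₁ * E₁ + u₁ * p₁ - ρ₀ * u₀ * E₀ - u₀ * p₀ := by
  have h : γ - 1 ≠ 0 := by linarith
  subst hσ hρ0 hu0 hE0 hρ1 hu1 hE1 hp0 hp1
  refine ⟨by ring, by field_simp; try ring, by field_simp; try ring, by field_simp; try ring, by field_simp; try ring⟩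
end

section
/- For every ψ ∈ C₀¹(ℝ²), with Ω = {(t,x) : x < 0, t > 0} and P = {(t,0) : t ≥ 0}: ∫_Ω ∂_tψ dx dt + ∫₀^∞ t ∂_tψ(t,0) dt + ∫_Ω ∂_xψ dx dt + ∫_{-∞}^0 ψ(0,x) dx = ∫₀^∞ ψ(t,0) dt − ∫₀^∞ ψ(t,0) dt = 0. In other words, the measures ϱ = 𝟙_Ω 𝓛² + t δ_P and m = 𝟙_Ω 𝓛² satisfy the weak mass conservation ⟨ϱ, ∂_tψ⟩ + ⟨m, ∂_xψ⟩ + ∫_{-∞}^0 ψ(0,x) dx = 0. -/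
/-!
Every term is an exact integral. Fubini and the fundamental theorem of calculus in `t` turn the
first into `-∫_{x<0} ψ(0,x)`, integration by parts in `t` turns the second into `-∫_{t>0} ψ(t,0)`
(the boundary term `t ψ(t,0)` vanishes at both ends), and the fundamental theorem of calculus in
`x` turns the third into `∫_{t>0} ψ(t,0)`; the four terms cancel.
-/

open MeasureTheory

open Set Filter Topology

section Slices

variable {X Y : Type*} [TopologicalSpace X] [TopologicalSpace Y]

theorem isClosedEmbedding_prodMkLeft [T1Space Y] (y : Y) :
    IsClosedEmbedding (fun x : X ↦ (x, y)) := by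
  refine ⟨isEmbedding_prodMkLeft y, ?_⟩
  convert isClosed_univ.prod (isClosed_singleton (x := y))
  ext ⟨a, b⟩
  simp [eq_comm]

theorem isClosedEmbedding_prodMkRight [T1Space X] (x : X) :
    IsClosedEmbedding (Prod.mk x : Y → X × Y) := by
  refine ⟨isEmbedding_prodMkRight x, ?_⟩
  convert (isClosed_singleton (x := x)).prod isClosed_univ
  ext ⟨a, b⟩
  simp [eq_comm]

end Slices

section Calculus

variable {E : Type*} [NormedAddCommGroup E] [NormedSpace ℝ E]

theorem deriv_comp_prodMkLeft {F : Type*} [NormedAddCommGroup F] [NormedSpace ℝ F]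
    {f : ℝ × F → E} {t : ℝ} {y : F} (hf : DifferentiableAt ℝ f (t, y)) :
    deriv (fun s ↦ f (s, y)) t = fderiv ℝ f (t, y) (1, 0) := by
  have hmk : HasDerivAt (fun s : ℝ ↦ (s, y)) (1, 0) t :=
    (hasDerivAt_id t).prodMk (hasDerivAt_const t y)
  exact (hf.hasFDerivAt.comp_hasDerivAt t hmk).deriv

variable [CompleteSpace E] {f : ℝ × ℝ → E}

theorem HasCompactSupport.integral_Ioi_deriv_comp_prodMkLeft (hf : ContDiff ℝ 1 f)
    (hc : HasCompactSupport f) (a y : ℝ) :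
    ∫ t in Ioi a, deriv (fun s ↦ f (s, y)) t = -f (a, y) :=
  (hc.comp_isClosedEmbedding (isClosedEmbedding_prodMkLeft y)).integral_Ioi_deriv_eq
    (hf.comp (contDiff_id.prodMk contDiff_const)) a

theorem HasCompactSupport.integral_Iio_deriv_comp_prodMkRight (hf : ContDiff ℝ 1 f)
    (hc : HasCompactSupport f) (t b : ℝ) :
    ∫ x in Iio b, deriv (fun y ↦ f (t, y)) x = f (t, b) := by
  rw [setIntegral_congr_set Iio_ae_eq_Iic]
  exact (hc.comp_isClosedEmbedding (isClosedEmbedding_prodMkRight t)).integral_Iic_deriv_eq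
    (hf.comp (contDiff_const.prodMk contDiff_id)) b

theorem HasCompactSupport.integral_Ioi_integral_deriv_comp_prodMkLeft (hf : ContDiff ℝ 1 f)
    (hc : HasCompactSupport f) (a : ℝ) (s : Set ℝ) :
    ∫ t in Ioi a, ∫ x in s, deriv (fun r ↦ f (r, x)) t = -∫ x in s, f (a, x) := by
  have hdiff := hf.differentiable one_ne_zero
  have hint : Integrable (fun p : ℝ × ℝ ↦ fderiv ℝ f p (1, 0)) :=
    ((hf.continuous_fderiv one_ne_zero).clm_apply continuous_const).integrable_of_hasCompactSupport
      (hc.fderiv_apply ℝ (1, 0))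
  calc ∫ t in Ioi a, ∫ x in s, deriv (fun r ↦ f (r, x)) t
      = ∫ t in Ioi a, ∫ x in s, fderiv ℝ f (t, x) (1, 0) := by
        simp only [deriv_comp_prodMkLeft (hdiff _)]
    _ = ∫ x in s, ∫ t in Ioi a, fderiv ℝ f (t, x) (1, 0) := by
        refine integral_integral_swap ?_
        rw [Measure.prod_restrict, ← Measure.volume_eq_prod]
        exact hint.restrict
    _ = ∫ x in s, -f (a, x) := by
        simp only [← deriv_comp_prodMkLeft (hdiff _), hc.integral_Ioi_deriv_comp_prodMkLeft hf]
    _ = -∫ x in s, f (a, x) := integral_neg _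

theorem HasCompactSupport.integral_Ioi_smul_deriv {g : ℝ → E} (hg : ContDiff ℝ 1 g)
    (hc : HasCompactSupport g) (a : ℝ) :
    ∫ t in Ioi a, t • deriv g t = -(a • g a) - ∫ t in Ioi a, g t := by
  have hg' : ∀ t, HasDerivAt g (deriv g t) t := fun t ↦
    (hg.differentiable one_ne_zero t).hasDerivAt
  have hint_g : Integrable g := hg.continuous.integrable_of_hasCompactSupport hc
  have hint_smul : Integrable fun t ↦ t • deriv g t :=
    (continuous_id.smul (hg.continuous_deriv le_rfl)).integrable_of_hasCompactSupport
      hc.deriv.smul_left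
  have hlim : Tendsto (fun t ↦ t • g t) atTop (𝓝 0) := by
    rw [hasCompactSupport_iff_eventuallyEq, coclosedCompact_eq_cocompact] at hc
    refine tendsto_const_nhds.congr' ?_
    filter_upwards [hc.filter_mono atTop_le_cocompact] with t ht
    simp [ht]
  have hderiv : ∀ t, HasDerivAt (fun t ↦ t • g t) (t • deriv g t + g t) t := fun t ↦
    one_smul ℝ (g t) ▸ (hasDerivAt_id t).smul (hg' t)
  have hftc : ∫ t in Ioi a, t • deriv g t + g t = 0 - a • g a :=
    integral_Ioi_of_hasDerivAt_of_tendsto' (fun t _ ↦ hderiv t)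
      (hint_smul.add hint_g).integrableOn hlim
  rw [integral_add hint_smul.integrableOn hint_g.integrableOn] at hftc
  rw [eq_sub_iff_add_eq, hftc, zero_sub]

end Calculus

theorem stmt_17 (ψ : ℝ × ℝ → ℝ) (hψ : ContDiff ℝ 1 ψ)
    (hψc : HasCompactSupport ψ) :
    (∫ t in Set.Ioi (0:ℝ), ∫ x in Set.Iio (0:ℝ), deriv (fun s => ψ (s, x)) t) +
    (∫ t in Set.Ioi (0:ℝ), t * deriv (fun s => ψ (s, 0)) t) +
    (∫ t in Set.Ioi (0:ℝ), ∫ x in Set.Iio (0:ℝ), deriv (fun y => ψ (t, y)) x) +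
    (∫ x in Set.Iio (0:ℝ), ψ (0, x)) = 0 := by
  have hparts := HasCompactSupport.integral_Ioi_smul_deriv (g := fun s ↦ ψ (s, 0))
    (hψ.comp (contDiff_id.prodMk contDiff_const))
    (hψc.comp_isClosedEmbedding (isClosedEmbedding_prodMkLeft 0)) 0
  simp only [smul_eq_mul] at hparts
  rw [hψc.integral_Ioi_integral_deriv_comp_prodMkLeft hψ, hparts]
  simp only [hψc.integral_Iio_deriv_comp_prodMkRight hψ, zero_mul]
  ring
end

section
/- For every ψ ∈ C₀¹(ℝ²), with Ω = {x < 0, t > 0} and P = {x = 0, t ≥ 0}: ∫_Ω ∂_tψ dx dt + ∫_Ω ∂_xψ dx dt − ∫₀^∞ 1·ψ(t,0) dt + ∫_{-∞}^0 1·ψ(0,x) dx = 0. In other words, m = 𝟙_Ω𝓛², n = 𝟙_Ω𝓛², ℘ = 0, w_p ≡ 1 satisfy the weak momentum balance ⟨m, ∂_tψ⟩ + ⟨n + ℘, ∂_xψ⟩ − ⟨w_p δ_P, ψ⟩ + ∫_{-∞}^0 ρ₀u₀ ψ(0,x) dx = 0 with ρ₀u₀ = 1. -/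
/-!
Both flux terms integrate out exactly. By Fubini and the fundamental theorem of calculus in `t`,
`∫_Ω ∂ₜψ = -∫_{x<0} ψ(0,x) dx`, which cancels the initial-data term; by the fundamental theorem of
calculus in `x`, `∫_{x<0} ∂ₓψ(t,x) dx = ψ(t,0)`, which cancels the piston term.
-/

open MeasureTheory Set

section Slices

variable {α β M : Type*} [TopologicalSpace α] [TopologicalSpace β] [T2Space α] [T2Space β]
  [Zero M] {f : α × β → M}

theorem HasCompactSupport.comp_prodMk_const (hf : HasCompactSupport f) (b : β) :
    HasCompactSupport fun a => f (a, b) :=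
  hf.comp_isClosedEmbedding <|
    Function.LeftInverse.isClosedEmbedding (f := Prod.fst) (fun _ => rfl) continuous_fst
      (by fun_prop)

theorem HasCompactSupport.comp_const_prodMk (hf : HasCompactSupport f) (a : α) :
    HasCompactSupport fun b => f (a, b) :=
  hf.comp_isClosedEmbedding <|
    Function.LeftInverse.isClosedEmbedding (f := Prod.snd) (fun _ => rfl) continuous_snd
      (by fun_prop)

end Slices

theorem DifferentiableAt.deriv_comp_prodMk_const {𝕜 E F : Type*} [NontriviallyNormedField 𝕜]
    [NormedAddCommGroup E] [NormedSpace 𝕜 E] [NormedAddCommGroup F] [NormedSpace 𝕜 F]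
    {f : 𝕜 × E → F} {t : 𝕜} {x : E} (hf : DifferentiableAt 𝕜 f (t, x)) :
    deriv (fun s => f (s, x)) t = fderiv 𝕜 f (t, x) (1, 0) :=
  (hf.hasFDerivAt.comp_hasDerivAt t ((hasDerivAt_id t).prodMk (hasDerivAt_const t x))).deriv

section Integrals

variable {E : Type*} [NormedAddCommGroup E] [NormedSpace ℝ E] [CompleteSpace E]

theorem HasCompactSupport.integral_Iio_deriv_eq {f : ℝ → E} (hf : ContDiff ℝ 1 f)
    (h2f : HasCompactSupport f) (b : ℝ) : ∫ x in Iio b, deriv f x = f b := by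
  rw [setIntegral_congr_set Iio_ae_eq_Iic, h2f.integral_Iic_deriv_eq hf]

theorem integral_Ioi_integral_deriv_fst {f : ℝ × ℝ → E} (hf : ContDiff ℝ 1 f)
    (h2f : HasCompactSupport f) (a : ℝ) (s : Set ℝ) :
    ∫ t in Ioi a, ∫ x in s, deriv (fun t => f (t, x)) t = -∫ x in s, f (a, x) := by
  have hpartial : (fun p : ℝ × ℝ => deriv (fun t => f (t, p.2)) p.1)
      = fun p => fderiv ℝ f p (1, 0) :=
    funext fun p => (hf.differentiable one_ne_zero p).deriv_comp_prodMk_const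
  have hint : Integrable (fun p : ℝ × ℝ => deriv (fun t => f (t, p.2)) p.1)
      ((volume.restrict (Ioi a)).prod (volume.restrict s)) := by
    rw [Measure.prod_restrict, hpartial, ← Measure.volume_eq_prod]
    refine (Continuous.integrable_of_hasCompactSupport ?_ (h2f.fderiv_apply ℝ _)).restrict
    exact (hf.continuous_fderiv one_ne_zero).clm_apply continuous_const
  calc ∫ t in Ioi a, ∫ x in s, deriv (fun t => f (t, x)) t
      = ∫ x in s, ∫ t in Ioi a, deriv (fun t => f (t, x)) t := integral_integral_swap hint
    _ = ∫ x in s, -f (a, x) := by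
      congr 1 with x
      exact (h2f.comp_prodMk_const x).integral_Ioi_deriv_eq
        (hf.comp (contDiff_id.prodMk contDiff_const)) a
    _ = -∫ x in s, f (a, x) := integral_neg _

end Integrals

theorem stmt_18 (ψ : ℝ × ℝ → ℝ) (hψ : ContDiff ℝ 1 ψ)
    (hψc : HasCompactSupport ψ) :
    (∫ t in Set.Ioi (0:ℝ), ∫ x in Set.Iio (0:ℝ), deriv (fun s => ψ (s, x)) t) +
    (∫ t in Set.Ioi (0:ℝ), ∫ x in Set.Iio (0:ℝ), deriv (fun y => ψ (t, y)) x) -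
    (∫ t in Set.Ioi (0:ℝ), (1:ℝ) * ψ (t, 0)) +
    (∫ x in Set.Iio (0:ℝ), (1:ℝ) * ψ (0, x)) = 0 := by
  have hx : ∀ t, ∫ x in Iio (0:ℝ), deriv (fun y => ψ (t, y)) x = ψ (t, 0) := fun t =>
    (hψc.comp_const_prodMk t).integral_Iio_deriv_eq
      (hψ.comp (contDiff_const.prodMk contDiff_id)) 0
  simp only [hx, integral_Ioi_integral_deriv_fst hψ hψc, one_mul]
  ring
end
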